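/- arXiv:1508.06890 — 8 statements merged into one kernel-verified Lean document; each statement's English description precedes it below -/
import Mathlib

section
/- Let x : [0,1] → ℝ^d be a continuously differentiable path. For any words I of length m and J of length n over {1,…,d}, the iterated integrals of x satisfy the shuffle product formula X^I_{0,1} · X^J_{0,1} = ∑_{σ ∈ S(m,n)} X^{σ·(IJ)}_{0,1}, where S(m,n) is the set of (m,n)-shuffles, i.e. permutations σ of {1,…,m+n} whose inverse is increasing on {1,…,m} and on {m+1,…,m+n}, IJ denotes the concatenated word of length m+n, and σ·(IJ) is the word whose k-th letter is the σ(k)-th letter of IJ. -/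
/-!
By Fubini, `X^I · X^J` is the integral of `∏ₖ x'_{(IJ)ₖ}(uₖ)` over the set of `u ∈ [0,1]^{m+n}`
that strictly increase on the first `m` and on the last `n` coordinates. Almost every `u` has distinct
coordinates and is then sorted by exactly one permutation `σ`; `u` lies in that set iff `σ` is an
`(m,n)`-shuffle. So the set is, up to a null set, the disjoint union over shuffles `σ` of
`{u | u ∘ σ increasing}`, and on the piece indexed by `σ` the substitution `t = u ∘ σ` turns the
integral into `X^{σ·(IJ)}`.
-/

open MeasureTheory

/-- The iterated integral of a continuously differentiable path `x : ℝ → ℝ^d`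
over the word `I`, on the interval `[0,1]`:
`X^I_{0,1} = ∫_{0<t_1<⋯<t_n<1} x'_{i_1}(t_1) ⋯ x'_{i_n}(t_n) dt`. -/
noncomputable def iterInt {d : ℕ} (x : ℝ → Fin d → ℝ) {n : ℕ} (I : Fin n → Fin d) : ℝ :=
  ∫ t in {t : Fin n → ℝ | (∀ k, t k ∈ Set.Icc (0 : ℝ) 1) ∧ StrictMono t},
    ∏ k, deriv (fun s => x s (I k)) (t k)

/-- `σ` is an `(m,n)`-shuffle: a permutation of `{0,…,m+n-1}` whose inverse is
increasing on the first `m` and on the last `n` positions. -/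
def IsShuffle (m n : ℕ) (σ : Equiv.Perm (Fin (m + n))) : Prop :=
  (∀ i j : Fin (m + n), (i : ℕ) < (j : ℕ) → (j : ℕ) < m → σ⁻¹ i < σ⁻¹ j) ∧
  (∀ i j : Fin (m + n), m ≤ (i : ℕ) → (i : ℕ) < (j : ℕ) → σ⁻¹ i < σ⁻¹ j)

section Order

variable {ι α : Type*} [LinearOrder ι] [Preorder α] {u : ι → α} {σ : Equiv.Perm ι}

lemma lt_iff_inv_lt_of_strictMono_comp (h : StrictMono (u ∘ σ)) (i j : ι) :
    u i < u j ↔ σ⁻¹ i < σ⁻¹ j := by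
  simpa [Equiv.Perm.inv_def] using h.lt_iff_lt (a := σ⁻¹ i) (b := σ⁻¹ j)

lemma strictMono_comp_iff_of_strictMono_comp_perm {κ : Type*} [Preorder κ]
    (h : StrictMono (u ∘ σ)) (g : κ → ι) :
    StrictMono (u ∘ g) ↔ StrictMono (⇑σ⁻¹ ∘ g) := by
  simp only [StrictMono, Function.comp_apply, lt_iff_inv_lt_of_strictMono_comp h]

end Order

lemma Tuple.eq_sort_of_strictMono_comp {k : ℕ} {α : Type*} [LinearOrder α] {u : Fin k → α}
    {σ : Equiv.Perm (Fin k)} (h : StrictMono (u ∘ σ)) : σ = Tuple.sort u :=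
  Tuple.eq_sort_iff.2 ⟨h.monotone, fun _ _ hij heq => absurd heq (h hij).ne⟩

lemma Tuple.strictMono_comp_sort {k : ℕ} {α : Type*} [LinearOrder α] {u : Fin k → α}
    (hu : Function.Injective u) : StrictMono (u ∘ Tuple.sort u) :=
  (Tuple.monotone_sort u).strictMono_of_injective (hu.comp (Tuple.sort u).injective)

lemma isShuffle_iff {m n : ℕ} {σ : Equiv.Perm (Fin (m + n))} :
    IsShuffle m n σ ↔
      StrictMono (⇑σ⁻¹ ∘ Fin.castAdd n) ∧ StrictMono (⇑σ⁻¹ ∘ Fin.natAdd m) := by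
  constructor
  · rintro ⟨hleft, hright⟩
    refine ⟨fun a b hab => hleft _ _ ?_ ?_, fun a b hab => hright _ _ ?_ ?_⟩ <;>
      simp only [Fin.lt_def] at hab <;> simp <;> omega
  · rintro ⟨hleft, hright⟩
    refine ⟨fun i j hij hjm => ?_, fun i j hmi hij => ?_⟩
    · have := @hleft ⟨i, by omega⟩ ⟨j, hjm⟩ hij
      simpa [Fin.castAdd, Fin.castLE] using this
    · have := @hright ⟨i - m, by omega⟩ ⟨j - m, by omega⟩ (by simp [Fin.lt_def]; omega)
      simpa [Fin.natAdd, Nat.add_sub_cancel' hmi, Nat.add_sub_cancel' (hmi.trans hij.le)]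
        using this

section Measure

variable {ι : Type*} [Fintype ι]

lemma volume_setOf_apply_eq_apply {i j : ι} (hij : i ≠ j) :
    volume {u : ι → ℝ | u i = u j} = 0 := by
  classical
  have hker : {u : ι → ℝ | u i = u j} =
      (LinearMap.ker ((LinearMap.proj i : (ι → ℝ) →ₗ[ℝ] ℝ) - LinearMap.proj j) : Set _) := by
    ext u
    simp [sub_eq_zero]
  rw [hker]
  refine Measure.addHaar_submodule _ _ fun htop => ?_
  have hsingle : Pi.single i (1 : ℝ) ∈ LinearMap.ker
      ((LinearMap.proj i : (ι → ℝ) →ₗ[ℝ] ℝ) - LinearMap.proj j) := htop ▸ trivial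
  simp [hij.symm] at hsingle

lemma ae_injective_pi : ∀ᵐ u : ι → ℝ, Function.Injective u := by
  simp only [Function.Injective, ae_all_iff]
  intro i j
  by_cases hij : i = j
  · exact .of_forall fun _ _ => hij
  · filter_upwards [measure_eq_zero_iff_ae_notMem.1 (volume_setOf_apply_eq_apply hij)]
      with u hu heq using absurd heq hu

lemma setIntegral_preimage_comp_perm {E : Type*} [NormedAddCommGroup E] [NormedSpace ℝ E]
    (σ : Equiv.Perm ι) (f : (ι → ℝ) → E) (s : Set (ι → ℝ)) :
    ∫ u in (· ∘ ⇑σ) ⁻¹' s, f (u ∘ σ) = ∫ t in s, f t := by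
  let Φ := MeasurableEquiv.piCongrLeft (fun _ : ι => ℝ) σ.symm
  have hΦ : ⇑Φ = (· ∘ ⇑σ) := by
    funext u j
    simpa using MeasurableEquiv.piCongrLeft_apply_apply (β := fun _ : ι => ℝ) (e := σ.symm)
      u (σ j)
  have := (volume_measurePreserving_piCongrLeft (fun _ : ι => ℝ) σ.symm).setIntegral_preimage_emb
    Φ.measurableEmbedding f s
  rwa [hΦ] at this

end Measure

lemma setIntegral_mul_setIntegral_eq_setIntegral_append {L : Type*} [RCLike L] {m n : ℕ}
    (f : (Fin m → ℝ) → L) (g : (Fin n → ℝ) → L) (s : Set (Fin m → ℝ)) (t : Set (Fin n → ℝ)) :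
    (∫ a in s, f a) * (∫ b in t, g b) =
      ∫ u in {u : Fin (m + n) → ℝ | u ∘ Fin.castAdd n ∈ s ∧ u ∘ Fin.natAdd m ∈ t},
        f (u ∘ Fin.castAdd n) * g (u ∘ Fin.natAdd m) := by
  let Φ : (Fin (m + n) → ℝ) ≃ᵐ (Fin m → ℝ) × (Fin n → ℝ) :=
    (MeasurableEquiv.piCongrLeft (fun _ => ℝ) finSumFinEquiv).symm.trans
      (MeasurableEquiv.sumPiEquivProdPi fun _ => ℝ)
  have hΦ : ∀ u, Φ u = (u ∘ Fin.castAdd n, u ∘ Fin.natAdd m) := fun u => by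
    ext i
    · exact congrArg u (finSumFinEquiv_apply_left i)
    · exact congrArg u (finSumFinEquiv_apply_right i)
  have hmp : MeasurePreserving Φ volume volume :=
    (volume_measurePreserving_sumPiEquivProdPi _).comp
      (volume_measurePreserving_piCongrLeft (fun _ => ℝ) finSumFinEquiv).symm
  rw [← setIntegral_prod_mul, ← Measure.volume_eq_prod,
    ← hmp.setIntegral_preimage_emb Φ.measurableEmbedding]
  simp only [hΦ]
  rfl

/-- The domain of integration of `iterInt`. -/
def orderedSimplex (k : ℕ) : Set (Fin k → ℝ) :=
  {t | (∀ i, t i ∈ Set.Icc (0 : ℝ) 1) ∧ StrictMono t}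

def shuffleRegion (m n : ℕ) : Set (Fin (m + n) → ℝ) :=
  {u | u ∘ Fin.castAdd n ∈ orderedSimplex m ∧ u ∘ Fin.natAdd m ∈ orderedSimplex n}

lemma measurableSet_orderedSimplex (k : ℕ) : MeasurableSet (orderedSimplex k) := by
  simp only [orderedSimplex, StrictMono, Set.ofPred_and, Set.ofPred_forall]
  measurability

lemma shuffleRegion_subset_cube (m n : ℕ) :
    shuffleRegion m n ⊆ Set.univ.pi fun _ => Set.Icc 0 1 :=
  fun _ hu i _ => Fin.addCases (fun a => hu.1.1 a) (fun b => hu.2.1 b) i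

lemma mem_shuffleRegion_iff_isShuffle {m n : ℕ} {σ : Equiv.Perm (Fin (m + n))}
    {u : Fin (m + n) → ℝ} (hu : u ∘ σ ∈ orderedSimplex (m + n)) :
    u ∈ shuffleRegion m n ↔ IsShuffle m n σ := by
  have hcube : ∀ i, u i ∈ Set.Icc (0 : ℝ) 1 := σ.forall_congr_right.1 hu.1
  simp only [shuffleRegion, orderedSimplex, Set.mem_ofPred_eq, Function.comp_apply, hcube,
    implies_true, true_and, isShuffle_iff,
    strictMono_comp_iff_of_strictMono_comp_perm hu.2]

lemma preimage_orderedSimplex_subset_shuffleRegion {m n : ℕ} {σ : Equiv.Perm (Fin (m + n))}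
    (hσ : IsShuffle m n σ) : (· ∘ ⇑σ) ⁻¹' orderedSimplex (m + n) ⊆ shuffleRegion m n :=
  fun _ hu => (mem_shuffleRegion_iff_isShuffle hu).2 hσ

lemma pairwise_disjoint_preimage_orderedSimplex (k : ℕ) :
    Pairwise fun σ τ : Equiv.Perm (Fin k) =>
      Disjoint ((· ∘ ⇑σ) ⁻¹' orderedSimplex k) ((· ∘ ⇑τ) ⁻¹' orderedSimplex k) :=
  fun _ _ hne => Set.disjoint_left.2 fun _ hσ hτ =>
    hne ((Tuple.eq_sort_of_strictMono_comp hσ.2).trans (Tuple.eq_sort_of_strictMono_comp hτ.2).symm)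

open scoped Classical in
lemma shuffleRegion_ae_eq_biUnion (m n : ℕ) :
    shuffleRegion m n =ᵐ[volume] ⋃ σ ∈ Finset.univ.filter (IsShuffle m n),
      (· ∘ ⇑σ) ⁻¹' orderedSimplex (m + n) := by
  filter_upwards [ae_injective_pi] with u hinj
  refine propext ⟨fun hu => ?_, fun hu => ?_⟩
  · have hsorted : u ∘ Tuple.sort u ∈ orderedSimplex (m + n) :=
      ⟨fun i => shuffleRegion_subset_cube m n hu _ trivial, Tuple.strictMono_comp_sort hinj⟩
    exact Set.mem_biUnion
      (Finset.mem_filter.2 ⟨Finset.mem_univ _, (mem_shuffleRegion_iff_isShuffle hsorted).1 hu⟩)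
      hsorted
  · obtain ⟨σ, hσ, hu⟩ := Set.mem_iUnion₂.1 hu
    exact preimage_orderedSimplex_subset_shuffleRegion (Finset.mem_filter.1 hσ).2 hu

section Path

variable {d : ℕ} {x : ℝ → Fin d → ℝ}

lemma integrableOn_cube_prod_deriv (hx : ContDiff ℝ 1 x) {k : ℕ} (w : Fin k → Fin d) :
    IntegrableOn (fun u => ∏ i, deriv (fun s => x s (w i)) (u i))
      (Set.univ.pi fun _ => Set.Icc 0 1) := by
  have hderiv (a : Fin d) : Continuous (deriv fun s => x s a) :=
    ((ContinuousLinearMap.proj a : (Fin d → ℝ) →L[ℝ] ℝ).contDiff.comp hx).continuous_deriv le_rfl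
  exact (continuous_finsetProd _ fun i _ => (hderiv (w i)).comp (continuous_apply i)).continuousOn
    |>.integrableOn_compact (isCompact_univ_pi fun _ => isCompact_Icc)

lemma iterInt_mul_iterInt {m n : ℕ} (I : Fin m → Fin d) (J : Fin n → Fin d) :
    iterInt x I * iterInt x J =
      ∫ u in shuffleRegion m n, ∏ k, deriv (fun s => x s (Fin.append I J k)) (u k) := by
  simp only [Fin.prod_univ_add, Fin.append_left, Fin.append_right]
  exact setIntegral_mul_setIntegral_eq_setIntegral_append _ _ (orderedSimplex m) (orderedSimplex n)

lemma setIntegral_preimage_orderedSimplex {k : ℕ} (w : Fin k → Fin d) (σ : Equiv.Perm (Fin k)) :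
    ∫ u in (· ∘ ⇑σ) ⁻¹' orderedSimplex k, ∏ i, deriv (fun s => x s (w i)) (u i) =
      iterInt x fun i => w (σ i) := by
  have hreindex (u : Fin k → ℝ) : ∏ i, deriv (fun s => x s (w i)) (u i) =
      ∏ i, deriv (fun s => x s (w (σ i))) ((u ∘ σ) i) :=
    (Equiv.prod_comp σ fun i => deriv (fun s => x s (w i)) (u i)).symm
  simp only [hreindex]
  exact setIntegral_preimage_comp_perm σ (fun t => ∏ i, deriv (fun s => x s (w (σ i))) (t i)) _

end Path

open scoped Classical in
/-- Shuffle product formula for iterated integrals of a C¹ path: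
`X^I_{0,1} ⬝ X^J_{0,1} = ∑_{σ ∈ S(m,n)} X^{σ·(IJ)}_{0,1}`. -/
theorem shuffle_product_formula {d : ℕ} (x : ℝ → Fin d → ℝ) (hx : ContDiff ℝ 1 x)
    {m n : ℕ} (I : Fin m → Fin d) (J : Fin n → Fin d) :
    iterInt x I * iterInt x J =
      ∑ σ ∈ Finset.univ.filter (fun σ : Equiv.Perm (Fin (m + n)) => IsShuffle m n σ),
        iterInt x (fun k => Fin.append I J (σ k)) := by
  rw [iterInt_mul_iterInt, setIntegral_congr_set (shuffleRegion_ae_eq_biUnion m n),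
    integral_biUnion_finset _
      (fun σ _ => (measurableSet_orderedSimplex _).preimage (by fun_prop))
      (fun σ _ τ _ hne => pairwise_disjoint_preimage_orderedSimplex _ hne)
      (fun σ hσ => (integrableOn_cube_prod_deriv hx _).mono_set
        ((preimage_orderedSimplex_subset_shuffleRegion (Finset.mem_filter.1 hσ).2).trans
          (shuffleRegion_subset_cube m n)))]
  exact Finset.sum_congr rfl fun σ _ => setIntegral_preimage_orderedSimplex _ σ
end

section
/- For every p ∈ (1,2) there exists θ* ∈ (0, π) such that for all θ₀ ∈ (0, θ*], the function f(θ) = sin^p(θ/2) + sin^p((θ₀ − θ)/2) is convex on the interval [0, θ₀], with f''(θ) > 0 for θ ∈ (0, θ₀). -/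
/-!
With `g u = sin (u / 2) ^ p` we have `f θ = g θ + g (θ₀ - θ)`, so `f'' θ = g'' θ + g'' (θ₀ - θ)`,
and `g'' u = p / 4 · sin (u / 2) ^ (p - 2) · ((p - 1) cos² (u / 2) - sin² (u / 2))`.
This is positive as long as `tan (u / 2) < √(p - 1)`, i.e. `0 < u < θ* := 2 arctan √(p - 1)`,
and `θ* ∈ (0, π)` because `p > 1`.
-/

open Real

variable {p : ℝ}

lemma hasDerivAt_sin_half_rpow (hp : 1 ≤ p) (u : ℝ) :
    HasDerivAt (fun u => sin (u / 2) ^ p) (p / 2 * (sin (u / 2) ^ (p - 1) * cos (u / 2))) u := by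
  have h := (((hasDerivAt_id' u).div_const 2).sin).rpow_const (p := p) (Or.inr hp)
  refine h.congr_deriv ?_
  ring

lemma hasDerivAt_sin_half_rpow_deriv {u : ℝ} (hs : 0 < sin (u / 2)) :
    HasDerivAt (fun u => p / 2 * (sin (u / 2) ^ (p - 1) * cos (u / 2)))
      (p / 4 * (sin (u / 2) ^ (p - 2) * ((p - 1) * cos (u / 2) ^ 2 - sin (u / 2) ^ 2))) u := by
  have hhalf := (hasDerivAt_id' u).div_const 2
  have h := ((hhalf.sin.rpow_const (p := p - 1) (Or.inl hs.ne')).fun_mul hhalf.cos).const_mul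
    (p / 2)
  refine h.congr_deriv ?_
  have hpow : sin (u / 2) ^ (p - 1) = sin (u / 2) ^ (p - 2) * sin (u / 2) := by
    rw [← rpow_add_one hs.ne']
    ring_nf
  rw [hpow, show p - 1 - 1 = p - 2 by ring]
  ring

lemma sin_sq_lt_sq_mul_cos_sq_of_lt_arctan {x c : ℝ} (hx0 : 0 ≤ x) (hx : x < arctan c) :
    sin x ^ 2 < c ^ 2 * cos x ^ 2 := by
  have hxπ : x < π / 2 := hx.trans (arctan_lt_pi_div_two c)
  have hcos : 0 < cos x := cos_pos_of_mem_Ioo ⟨by linarith [pi_pos], hxπ⟩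
  have htan : tan x < c := by
    rwa [← arctan_strictMono.lt_iff_lt, arctan_tan (by linarith [pi_pos]) hxπ]
  rw [tan_eq_sin_div_cos, div_lt_iff₀ hcos] at htan
  have hsin : 0 ≤ sin x := sin_nonneg_of_nonneg_of_le_pi hx0 (by linarith)
  nlinarith

lemma sin_half_rpow_deriv2_pos {u : ℝ} (hu0 : 0 < u) (hu : u < 2 * arctan √(p - 1)) :
    0 < p / 4 * (sin (u / 2) ^ (p - 2) * ((p - 1) * cos (u / 2) ^ 2 - sin (u / 2) ^ 2)) := by
  have hp : 1 < p := by
    have : 0 < arctan √(p - 1) := by linarith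
    linarith [sqrt_pos.mp (arctan_pos.mp this)]
  have hcmp : sin (u / 2) ^ 2 < √(p - 1) ^ 2 * cos (u / 2) ^ 2 :=
    sin_sq_lt_sq_mul_cos_sq_of_lt_arctan (by linarith) (by linarith)
  rw [sq_sqrt (by linarith)] at hcmp
  have hs : 0 < sin (u / 2) :=
    sin_pos_of_pos_of_lt_pi (by linarith) (by linarith [arctan_lt_pi_div_two √(p - 1)])
  have : 0 < sin (u / 2) ^ (p - 2) := rpow_pos_of_pos hs _
  have : 0 < (p - 1) * cos (u / 2) ^ 2 - sin (u / 2) ^ 2 := by linarith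
  have : 0 < p / 4 := by linarith
  positivity

lemma hasDerivAt_sin_half_rpow_add_sin_half_sub_rpow (hp : 1 ≤ p) (θ₀ θ : ℝ) :
    HasDerivAt (fun θ => sin (θ / 2) ^ p + sin ((θ₀ - θ) / 2) ^ p)
      (p / 2 * (sin (θ / 2) ^ (p - 1) * cos (θ / 2))
        - p / 2 * (sin ((θ₀ - θ) / 2) ^ (p - 1) * cos ((θ₀ - θ) / 2))) θ := by
  rw [sub_eq_add_neg]
  exact (hasDerivAt_sin_half_rpow hp θ).add
    ((hasDerivAt_sin_half_rpow hp (θ₀ - θ)).comp_const_sub θ₀ θ)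

lemma deriv_sin_half_rpow_add_sin_half_sub_rpow (hp : 1 ≤ p) (θ₀ : ℝ) :
    deriv (fun θ => sin (θ / 2) ^ p + sin ((θ₀ - θ) / 2) ^ p) = fun θ =>
      p / 2 * (sin (θ / 2) ^ (p - 1) * cos (θ / 2))
        - p / 2 * (sin ((θ₀ - θ) / 2) ^ (p - 1) * cos ((θ₀ - θ) / 2)) :=
  funext fun θ => (hasDerivAt_sin_half_rpow_add_sin_half_sub_rpow hp θ₀ θ).deriv

lemma deriv2_sin_half_rpow_add_sin_half_sub_rpow_pos (hp : 1 ≤ p) {θ₀ θ : ℝ} (hθ : 0 < θ)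
    (hθθ₀ : θ < θ₀) (hθ₀ : θ₀ ≤ 2 * arctan √(p - 1)) :
    0 < deriv (deriv (fun θ => sin (θ / 2) ^ p + sin ((θ₀ - θ) / 2) ^ p)) θ := by
  have hθ₀π : θ₀ < π := by linarith [arctan_lt_pi_div_two √(p - 1)]
  have hs₁ : 0 < sin (θ / 2) := sin_pos_of_pos_of_lt_pi (by linarith) (by linarith)
  have hs₂ : 0 < sin ((θ₀ - θ) / 2) := sin_pos_of_pos_of_lt_pi (by linarith) (by linarith)
  have h := (hasDerivAt_sin_half_rpow_deriv (p := p) hs₁).fun_sub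
    ((hasDerivAt_sin_half_rpow_deriv (p := p) hs₂).comp_const_sub θ₀ θ)
  rw [deriv_sin_half_rpow_add_sin_half_sub_rpow hp, h.deriv, sub_neg_eq_add]
  exact add_pos (sin_half_rpow_deriv2_pos hθ (by linarith))
    (sin_half_rpow_deriv2_pos (by linarith) (by linarith))

/-- For `p ∈ (1,2)` there is `θ* ∈ (0,π)` such that for all `θ₀ ∈ (0,θ*]`, the function
`f(θ) = sin^p(θ/2) + sin^p((θ₀ - θ)/2)` is convex on `[0,θ₀]`, with `f'' > 0` on `(0,θ₀)`. -/
theorem arc_chord_function_convex (p : ℝ) (hp : p ∈ Set.Ioo (1 : ℝ) 2) :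
    ∃ θs ∈ Set.Ioo (0 : ℝ) π, ∀ θ₀ ∈ Set.Ioc (0 : ℝ) θs,
      ConvexOn ℝ (Set.Icc 0 θ₀) (fun θ => sin (θ / 2) ^ p + sin ((θ₀ - θ) / 2) ^ p) ∧
      ∀ θ ∈ Set.Ioo (0 : ℝ) θ₀,
        0 < deriv (deriv (fun θ => sin (θ / 2) ^ p + sin ((θ₀ - θ) / 2) ^ p)) θ := by
  have hp1 : 1 < p := hp.1
  have hθs : 0 < 2 * arctan √(p - 1) := by
    have := arctan_pos.mpr (sqrt_pos.mpr (sub_pos.mpr hp1))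
    linarith
  refine ⟨2 * arctan √(p - 1), ⟨hθs, by linarith [arctan_lt_pi_div_two √(p - 1)]⟩,
    fun θ₀ hθ₀ => ?_⟩
  have hpos : ∀ θ ∈ Set.Ioo (0 : ℝ) θ₀,
      0 < deriv (deriv (fun θ => sin (θ / 2) ^ p + sin ((θ₀ - θ) / 2) ^ p)) θ :=
    fun θ hθ => deriv2_sin_half_rpow_add_sin_half_sub_rpow_pos hp1.le hθ.1 hθ.2 hθ₀.2
  refine ⟨(strictConvexOn_of_deriv2_pos (convex_Icc 0 θ₀) ?_ ?_).convexOn, hpos⟩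
  · exact fun θ _ => (hasDerivAt_sin_half_rpow_add_sin_half_sub_rpow hp1.le θ₀ θ).continuousAt
      |>.continuousWithinAt
  · simpa only [interior_Icc, Function.iterate_succ, Function.iterate_zero, Function.comp_apply,
      id] using hpos
end

section
/- For every p ∈ (1,2) there exists θ* ∈ (0, π) such that for all θ₀ ∈ (0, θ*] and all θ ∈ [0, θ₀]: sin^p(θ/2) + sin^p((θ₀ − θ)/2) ≤ sin^p(θ₀/2). Equivalently, if A, B are points on the unit circle in ℝ² subtending a central angle θ₀ ≤ θ* and E is any point on the (minor) arc from A to B, then |A − E|^p + |E − B|^p ≤ |A − B|^p, where |·| is the Euclidean norm. -/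
open Real Set

/-!
On `[0, arctan √(p - 1)]` the function `x ↦ sin^p x` is convex: its derivative is
`p cos x sin^(p-1) x`, and `(cos x sin^(p-1) x)' = sin^(p-2) x ((p - 1) cos² x - sin² x)` is
nonnegative exactly while `tan² x ≤ p - 1`. A convex function with `f 0 ≤ 0` is superadditive,
which gives the inequality for `θ₀ ≤ θ* := 2 arctan √(p - 1) < π`.
-/

theorem ConvexOn.map_mul_le_mul {r : ℝ} {f : ℝ → ℝ} (hf : ConvexOn ℝ (Icc 0 r) f)
    (hf0 : f 0 ≤ 0) {x t : ℝ} (hx : x ∈ Icc 0 r) (ht0 : 0 ≤ t) (ht1 : t ≤ 1) :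
    f (t * x) ≤ t * f x := by
  have h := hf.2 (left_mem_Icc.2 (hx.1.trans hx.2)) hx (sub_nonneg.2 ht1) ht0 (by ring)
  simp only [smul_eq_mul, mul_zero, zero_add] at h
  nlinarith

theorem ConvexOn.superadditive {r : ℝ} {f : ℝ → ℝ} (hf : ConvexOn ℝ (Icc 0 r) f)
    (hf0 : f 0 ≤ 0) {a b : ℝ} (ha : 0 ≤ a) (hb : 0 ≤ b) (hab : a + b ≤ r) :
    f a + f b ≤ f (a + b) := by
  rcases (add_nonneg ha hb).eq_or_lt with hs | hs
  · obtain ⟨rfl, rfl⟩ : a = 0 ∧ b = 0 := ⟨by linarith, by linarith⟩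
    simpa using hf0
  have hmem : a + b ∈ Icc 0 r := ⟨hs.le, hab⟩
  have hfa := hf.map_mul_le_mul hf0 hmem (div_nonneg ha hs.le) (div_le_one_of_le₀ (by linarith) hs.le)
  have hfb := hf.map_mul_le_mul hf0 hmem (div_nonneg hb hs.le) (div_le_one_of_le₀ (by linarith) hs.le)
  rw [div_mul_cancel₀ _ hs.ne'] at hfa hfb
  calc f a + f b ≤ a / (a + b) * f (a + b) + b / (a + b) * f (a + b) := add_le_add hfa hfb
    _ = f (a + b) := by field_simp

theorem sin_sq_le_mul_cos_sq_of_le_arctan_sqrt {q t : ℝ} (hq : 0 ≤ q) (ht0 : 0 ≤ t)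
    (ht : t ≤ arctan √q) : sin t ^ 2 ≤ q * cos t ^ 2 := by
  have htπ : t < π / 2 := ht.trans_lt (arctan_lt_pi_div_two _)
  have hcos : 0 < cos t := cos_pos_of_mem_Ioo ⟨by linarith [pi_pos], htπ⟩
  have htan : tan t ≤ √q := by
    rwa [← arctan_strictMono.le_iff_le, arctan_tan (by linarith [pi_pos]) htπ]
  have hsin : sin t ≤ √q * cos t := by
    rwa [tan_eq_sin_div_cos, div_le_iff₀ hcos] at htan
  have hsin0 : 0 ≤ sin t := sin_nonneg_of_nonneg_of_le_pi ht0 (by linarith [pi_pos])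
  calc sin t ^ 2 ≤ (√q * cos t) ^ 2 := pow_le_pow_left₀ hsin0 hsin 2
    _ = q * cos t ^ 2 := by rw [mul_pow, sq_sqrt hq]

theorem monotoneOn_cos_mul_sin_rpow {p : ℝ} (hp : 1 < p) :
    MonotoneOn (fun t => cos t * sin t ^ (p - 1)) (Icc 0 (arctan √(p - 1))) := by
  have hc : arctan √(p - 1) < π / 2 := arctan_lt_pi_div_two _
  refine monotoneOn_of_deriv_nonneg (convex_Icc _ _)
    (continuous_cos.mul (continuous_sin.rpow_const fun _ => Or.inr (by linarith))).continuousOn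
    ?_ ?_ <;> rw [interior_Icc] <;> intro t ht
  all_goals
    have hsin : 0 < sin t := sin_pos_of_pos_of_lt_pi ht.1 (by linarith [ht.2, pi_pos])
    have hderiv : HasDerivAt (fun t => cos t * sin t ^ (p - 1))
        (-sin t * sin t ^ (p - 1) + cos t * (cos t * (p - 1) * sin t ^ (p - 1 - 1))) t :=
      (hasDerivAt_cos t).mul ((hasDerivAt_sin t).rpow_const (Or.inl hsin.ne'))
  · exact hderiv.differentiableAt.differentiableWithinAt
  · have hsq := sin_sq_le_mul_cos_sq_of_le_arctan_sqrt (by linarith) ht.1.le ht.2.le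
    have hsplit : sin t ^ (p - 1) = sin t ^ (p - 1 - 1) * sin t := by
      rw [← rpow_add_one hsin.ne', sub_add_cancel]
    have hpow : 0 ≤ sin t ^ (p - 1 - 1) := rpow_nonneg hsin.le _
    rw [hderiv.deriv, hsplit]
    nlinarith [mul_le_mul_of_nonneg_left hsq hpow]

theorem hasDerivAt_sin_rpow {p : ℝ} (hp : 1 ≤ p) (t : ℝ) :
    HasDerivAt (fun t => sin t ^ p) (p * (cos t * sin t ^ (p - 1))) t := by
  convert (hasDerivAt_sin t).rpow_const (Or.inr hp) using 1
  ring

theorem convexOn_sin_rpow {p : ℝ} (hp : 1 < p) :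
    ConvexOn ℝ (Icc 0 (arctan √(p - 1))) (fun t => sin t ^ p) := by
  have hderiv : deriv (fun t => sin t ^ p) = fun t => p * (cos t * sin t ^ (p - 1)) :=
    funext fun t => (hasDerivAt_sin_rpow hp.le t).deriv
  refine MonotoneOn.convexOn_of_deriv (convex_Icc _ _)
    (continuous_sin.rpow_const fun _ => Or.inr (by linarith)).continuousOn
    (fun t _ => (hasDerivAt_sin_rpow hp.le t).differentiableAt.differentiableWithinAt) ?_
  rw [hderiv]
  exact fun x hx y hy hxy => mul_le_mul_of_nonneg_left
    (monotoneOn_cos_mul_sin_rpow hp (interior_subset hx) (interior_subset hy) hxy) (by linarith)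

/-- For `p ∈ (1,2)` there is `θ* ∈ (0,π)` such that for all `θ₀ ∈ (0,θ*]` and all
`θ ∈ [0,θ₀]`: `sin^p(θ/2) + sin^p((θ₀-θ)/2) ≤ sin^p(θ₀/2)`.  Equivalently, if `A, B` lie
on the unit circle subtending a central angle `θ₀` and `E` is any point on the arc from
`A` to `B`, then `|A-E|^p + |E-B|^p ≤ |A-B|^p`. -/
theorem arc_chord_power_inequality (p : ℝ) (hp : p ∈ Set.Ioo (1 : ℝ) 2) :
    ∃ θs ∈ Set.Ioo (0 : ℝ) π, ∀ θ₀ ∈ Set.Ioc (0 : ℝ) θs, ∀ θ ∈ Set.Icc (0 : ℝ) θ₀,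
      sin (θ / 2) ^ p + sin ((θ₀ - θ) / 2) ^ p ≤ sin (θ₀ / 2) ^ p := by
  have hpos : 0 < arctan √(p - 1) := arctan_pos.2 (sqrt_pos.2 (by linarith [hp.1]))
  have hlt : arctan √(p - 1) < π / 2 := arctan_lt_pi_div_two _
  refine ⟨2 * arctan √(p - 1), ⟨by linarith, by linarith⟩, fun θ₀ hθ₀ θ hθ => ?_⟩
  have hzero : sin 0 ^ p ≤ 0 := by rw [sin_zero, zero_rpow (by linarith [hp.1])]
  have h := (convexOn_sin_rpow hp.1).superadditive hzero (a := θ / 2) (b := (θ₀ - θ) / 2)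
    (by linarith [hθ.1]) (by linarith [hθ.2]) (by linarith [hθ₀.2])
  rwa [show θ / 2 + (θ₀ - θ) / 2 = θ₀ / 2 by ring] at h
end

section
/- Let p ∈ (1,2), θ₀ > 0 and ε > 0. Then for every c ∈ [0, θ₀]: (c + ε)^p − c^p ≤ max{ (√ε + ε)^p , θ₀^p ((1 + √ε)^p − 1) }. -/
/-! Split at `c = √ε`. Below it the increment is at most `(c + ε)^p ≤ (√ε + ε)^p`. Above it,
`(c + ε)^p - c^p = c^p ((1 + ε/c)^p - 1)` with `ε/c < √ε`, and both factors are monotone. -/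

namespace Real

variable {p c ε : ℝ}

lemma rpow_add_sub_rpow_le_rpow_add {a : ℝ} (hp : 0 ≤ p) (hc : 0 ≤ c) (hca : c ≤ a)
    (hε : 0 ≤ ε) : (c + ε) ^ p - c ^ p ≤ (a + ε) ^ p := by
  have hmono : (c + ε) ^ p ≤ (a + ε) ^ p := rpow_le_rpow (by positivity) (by linarith) hp
  linarith [rpow_nonneg hc p]

lemma rpow_add_eq_rpow_mul_one_add_div (hc : 0 < c) (hε : 0 ≤ ε) :
    (c + ε) ^ p = c ^ p * (1 + ε / c) ^ p := by
  rw [← mul_rpow hc.le (by positivity), mul_one_add, mul_div_cancel₀ _ hc.ne']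

lemma rpow_add_sub_rpow_le_mul {a δ : ℝ} (hp : 0 ≤ p) (hc : 0 < c) (hca : c ≤ a)
    (hε : 0 ≤ ε) (hδ : ε / c ≤ δ) :
    (c + ε) ^ p - c ^ p ≤ a ^ p * ((1 + δ) ^ p - 1) := by
  have hratio : 0 ≤ ε / c := div_nonneg hε hc.le
  have hfactor : 0 ≤ (1 + ε / c) ^ p - 1 := sub_nonneg.mpr (one_le_rpow (by linarith) hp)
  calc (c + ε) ^ p - c ^ p = c ^ p * ((1 + ε / c) ^ p - 1) := by
        rw [rpow_add_eq_rpow_mul_one_add_div hc hε]; ring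
    _ ≤ a ^ p * ((1 + δ) ^ p - 1) := by
        have ha : 0 ≤ a := hc.le.trans hca
        gcongr

end Real

theorem spike_increment_bound_general (p θ₀ ε : ℝ) (hp : p ∈ Set.Ioo (1 : ℝ) 2)
    (hε : 0 < ε) (c : ℝ) (hc : c ∈ Set.Icc (0 : ℝ) θ₀) :
    (c + ε) ^ p - c ^ p ≤
      max ((Real.sqrt ε + ε) ^ p) (θ₀ ^ p * ((1 + Real.sqrt ε) ^ p - 1)) := by
  obtain ⟨hc0, hcθ₀⟩ := hc
  have hp0 : 0 ≤ p := by linarith [hp.1]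
  rcases le_or_gt c (Real.sqrt ε) with hsmall | hlarge
  · exact le_max_of_le_left (Real.rpow_add_sub_rpow_le_rpow_add hp0 hc0 hsmall hε.le)
  · have hcpos : 0 < c := (Real.sqrt_nonneg ε).trans_lt hlarge
    have hratio : ε / c ≤ Real.sqrt ε := by
      rw [div_le_iff₀ hcpos]
      nlinarith [Real.mul_self_sqrt hε.le, Real.sqrt_nonneg ε]
    exact le_max_of_le_right (Real.rpow_add_sub_rpow_le_mul hp0 hcpos hcθ₀ hε.le hratio)

/-- For `p ∈ (1,2)`, `θ₀ > 0`, `ε > 0` and every `c ∈ [0,θ₀]`: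
`(c+ε)^p - c^p ≤ max{(√ε+ε)^p, θ₀^p ((1+√ε)^p - 1)}`. -/
theorem spike_increment_bound (p θ₀ ε : ℝ) (hp : p ∈ Set.Ioo (1 : ℝ) 2)
    (hθ₀ : 0 < θ₀) (hε : 0 < ε) (c : ℝ) (hc : c ∈ Set.Icc (0 : ℝ) θ₀) :
    (c + ε) ^ p - c ^ p ≤
      max ((Real.sqrt ε + ε) ^ p) (θ₀ ^ p * ((1 + Real.sqrt ε) ^ p - 1)) :=
  spike_increment_bound_general p θ₀ ε hp hε c hc
end

section
/- Fix D ≥ 1, ε > 0 and 0 < δ₁ < ε. For 0 < δ ≤ δ₁ and z ∈ V, let C_z^δ denote the convex hull of H_z^δ ∪ H_z^{δ₁}. Then for any two distinct z, z' ∈ V and any 0 < δ ≤ δ₁, the closures of C_z^δ and C_{z'}^δ are disjoint: closure(C_z^δ) ∩ closure(C_{z'}^δ) = ∅. -/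
/-- `r` is a half-integer: `r = n/2` with `n` an odd integer. -/
def IsHalfInt (r : ℝ) : Prop := ∃ n : ℤ, Odd n ∧ r = (n : ℝ) / 2

/-- `V`: the set of points of `ℝ^D` having exactly `D - 1` integer coordinates, the
remaining coordinate being a half-integer. -/
def Vset (D : ℕ) : Set (Fin D → ℝ) :=
  {z | ∃ k₀ : Fin D, IsHalfInt (z k₀) ∧ ∀ k : Fin D, k ≠ k₀ → ∃ m : ℤ, z k = (m : ℝ)}

/-- The open box `H_z^δ`: coordinates with `z_k ∈ ℤ` are within `(ε-δ)/2` of `ε z_k`,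
coordinates with `z_k` a half-integer are within `δ/4` of `ε z_k`. -/
def Hcube (D : ℕ) (ε δ : ℝ) (z : Fin D → ℝ) : Set (Fin D → ℝ) :=
  {a | ∀ k, ((∃ m : ℤ, z k = (m : ℝ)) → |a k - ε * z k| < (ε - δ) / 2) ∧
            (IsHalfInt (z k) → |a k - ε * z k| < δ / 4)}

/-!
A point `a` of the closure of `C_z^δ` obeys the closed convex constraints shared by both boxes
`H_z^δ` and `H_z^{δ₁}`: `|a_k - ε z_k| ≤ (ε - δ)/2` on integer coordinates, `|a_h - ε z_h| ≤ δ₁/4`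
on the half-integer coordinate `h`, and `2 |a_k - ε z_k| + 4 |a_h - ε z_h| ≤ ε`, the last one
because `2 (ε - δ)/2 + 4 δ/4 = ε` for every `δ`. Distinct points of `V` are `1` apart in a
coordinate where both are integers or both half-integers, and otherwise `1/2` apart in both
half-integer coordinates; after scaling by `ε`, the triangle inequality contradicts these
constraints in each case.
-/

open Set

lemma IsHalfInt.exists_eq_intCast_add_half {r : ℝ} (hr : IsHalfInt r) :
    ∃ m : ℤ, r = m + 1 / 2 := by
  obtain ⟨n, ⟨m, rfl⟩, rfl⟩ := hr
  exact ⟨m, by push_cast; ring⟩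

lemma one_le_abs_sub_of_eq_intCast {r s : ℝ} (hr : ∃ m : ℤ, r = m) (hs : ∃ n : ℤ, s = n)
    (hrs : r ≠ s) : 1 ≤ |r - s| := by
  obtain ⟨m, rfl⟩ := hr
  obtain ⟨n, rfl⟩ := hs
  have := Int.one_le_abs (sub_ne_zero.mpr (by exact_mod_cast hrs : m ≠ n))
  exact_mod_cast this

lemma IsHalfInt.one_half_le_abs_sub {r s : ℝ} (hr : IsHalfInt r) (hs : ∃ n : ℤ, s = n) :
    1 / 2 ≤ |r - s| := by
  obtain ⟨m, rfl⟩ := hr.exists_eq_intCast_add_half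
  obtain ⟨n, rfl⟩ := hs
  rcases le_or_gt n m with hnm | hmn
  · have : (n : ℝ) ≤ m := by exact_mod_cast hnm
    exact le_abs.mpr (Or.inl (by linarith))
  · have : (m : ℝ) + 1 ≤ n := by exact_mod_cast hmn
    exact le_abs.mpr (Or.inr (by linarith))

lemma IsHalfInt.one_le_abs_sub {r s : ℝ} (hr : IsHalfInt r) (hs : IsHalfInt s) (hrs : r ≠ s) :
    1 ≤ |r - s| := by
  obtain ⟨m, rfl⟩ := hr.exists_eq_intCast_add_half
  obtain ⟨n, rfl⟩ := hs.exists_eq_intCast_add_half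
  rw [add_sub_add_right_eq_sub]
  exact one_le_abs_sub_of_eq_intCast ⟨m, rfl⟩ ⟨n, rfl⟩ fun h => hrs (by rw [h])

lemma mul_le_abs_sub_add_abs_sub {ε g x y a : ℝ} (hε : 0 ≤ ε) (hg : g ≤ |x - y|) :
    ε * g ≤ |a - ε * x| + |a - ε * y| :=
  calc ε * g ≤ |ε * x - ε * y| := by
        rw [← mul_sub, abs_mul, abs_of_nonneg hε]; exact mul_le_mul_of_nonneg_left hg hε
    _ ≤ |a - ε * x| + |a - ε * y| := by
        rw [abs_sub_comm a]; exact abs_sub_le _ _ _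

theorem ConvexOn.le_of_mem_closure_convexHull {E : Type*} [AddCommGroup E] [Module ℝ E]
    [TopologicalSpace E] {f : E → ℝ} {s : Set E} {C : ℝ} (hf : ConvexOn ℝ univ f)
    (hfc : Continuous f) (hs : ∀ x ∈ s, f x ≤ C) {x : E} (hx : x ∈ closure (convexHull ℝ s)) :
    f x ≤ C := by
  have hsub : closure (convexHull ℝ s) ⊆ {x ∈ univ | f x ≤ C} :=
    closure_minimal (convexHull_min (fun x hx => ⟨mem_univ x, hs x hx⟩) (hf.convex_le C))
      (by simpa using isClosed_le hfc continuous_const)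
  exact (hsub hx).2

lemma convexOn_abs_apply_sub {ι : Type*} (k : ι) (b : ℝ) :
    ConvexOn ℝ univ fun a : ι → ℝ => |a k - b| := by
  have := (convexOn_univ_dist b).comp_linearMap (LinearMap.proj (R := ℝ) (φ := fun _ : ι => ℝ) k)
  rwa [preimage_univ] at this

/-- The set `C_z^δ` of the paper. -/
def convexDomain (D : ℕ) (ε δ₁ δ : ℝ) (z : Fin D → ℝ) : Set (Fin D → ℝ) :=
  convexHull ℝ (Hcube D ε δ z ∪ Hcube D ε δ₁ z)

section convexDomain

variable {D : ℕ} {ε δ₁ δ : ℝ} {z a : Fin D → ℝ}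

lemma abs_sub_le_of_mem_closure_convexDomain_of_int (hδδ₁ : δ ≤ δ₁)
    (ha : a ∈ closure (convexDomain D ε δ₁ δ z)) {k : Fin D} (hk : ∃ m : ℤ, z k = m) :
    |a k - ε * z k| ≤ (ε - δ) / 2 := by
  refine (convexOn_abs_apply_sub k (ε * z k)).le_of_mem_closure_convexHull (by fun_prop)
    ?_ ha
  rintro b (hb | hb)
  · exact ((hb k).1 hk).le
  · linarith [(hb k).1 hk]

lemma abs_sub_le_of_mem_closure_convexDomain_of_isHalfInt (hδδ₁ : δ ≤ δ₁)
    (ha : a ∈ closure (convexDomain D ε δ₁ δ z)) {h : Fin D} (hh : IsHalfInt (z h)) :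
    |a h - ε * z h| ≤ δ₁ / 4 := by
  refine (convexOn_abs_apply_sub h (ε * z h)).le_of_mem_closure_convexHull (by fun_prop)
    ?_ ha
  rintro b (hb | hb)
  · linarith [(hb h).2 hh]
  · exact ((hb h).2 hh).le

lemma two_mul_abs_sub_add_four_mul_abs_sub_le_of_mem_closure_convexDomain
    (ha : a ∈ closure (convexDomain D ε δ₁ δ z)) {k h : Fin D} (hk : ∃ m : ℤ, z k = m)
    (hh : IsHalfInt (z h)) :
    2 * |a k - ε * z k| + 4 * |a h - ε * z h| ≤ ε := by
  refine (((convexOn_abs_apply_sub k (ε * z k)).smul zero_le_two).add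
    ((convexOn_abs_apply_sub h (ε * z h)).smul zero_le_four)).le_of_mem_closure_convexHull
    (by fun_prop) ?_ ha
  rintro b (hb | hb) <;>
  · simp only [Pi.add_apply, smul_eq_mul]
    linarith [(hb k).1 hk, (hb h).2 hh]

end convexDomain

theorem convex_hull_domains_disjoint_general (D : ℕ) (ε δ₁ δ : ℝ)
    (hδ₁ε : δ₁ < ε) (hδ0 : 0 < δ) (hδδ₁ : δ ≤ δ₁)
    (z z' : Fin D → ℝ) (hz : z ∈ Vset D) (hz' : z' ∈ Vset D) (hne : z ≠ z') :
    closure (convexHull ℝ (Hcube D ε δ z ∪ Hcube D ε δ₁ z)) ∩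
      closure (convexHull ℝ (Hcube D ε δ z' ∪ Hcube D ε δ₁ z')) = ∅ := by
  have hε : 0 ≤ ε := by linarith
  rw [eq_empty_iff_forall_notMem]
  rintro a ⟨ha, ha'⟩
  obtain ⟨h, hh, hz_int⟩ := hz
  obtain ⟨h', hh', hz'_int⟩ := hz'
  rcases eq_or_ne h h' with rfl | hhh'
  · obtain ⟨k, hk⟩ := Function.ne_iff.mp hne
    rcases eq_or_ne k h with rfl | hkh
    · linarith [mul_le_abs_sub_add_abs_sub (a := a k) hε (hh.one_le_abs_sub hh' hk),
        abs_sub_le_of_mem_closure_convexDomain_of_isHalfInt hδδ₁ ha hh,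
        abs_sub_le_of_mem_closure_convexDomain_of_isHalfInt hδδ₁ ha' hh']
    · linarith [mul_le_abs_sub_add_abs_sub (a := a k) hε
          (one_le_abs_sub_of_eq_intCast (hz_int k hkh) (hz'_int k hkh) hk),
        abs_sub_le_of_mem_closure_convexDomain_of_int hδδ₁ ha (hz_int k hkh),
        abs_sub_le_of_mem_closure_convexDomain_of_int hδδ₁ ha' (hz'_int k hkh)]
  · have hz'h := hz'_int h hhh'
    have hzh' := hz_int h' hhh'.symm
    -- adding the two mixed bounds leaves room for the two gaps `ε/2` only if `|a h' - ε z h'|`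
    -- reaches `ε/2`, which exceeds `(ε - δ)/2`
    linarith [mul_le_abs_sub_add_abs_sub (a := a h) hε (hh.one_half_le_abs_sub hz'h),
      mul_le_abs_sub_add_abs_sub (a := a h') hε (hh'.one_half_le_abs_sub hzh'),
      two_mul_abs_sub_add_four_mul_abs_sub_le_of_mem_closure_convexDomain ha hzh' hh,
      two_mul_abs_sub_add_four_mul_abs_sub_le_of_mem_closure_convexDomain ha' hz'h hh',
      abs_sub_le_of_mem_closure_convexDomain_of_int hδδ₁ ha hzh']

/-- Lemma 5.2 (1): for `0 < δ ≤ δ₁ < ε` and distinct `z, z' ∈ V`, the closures of the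
convex hulls `C_z^δ = conv(H_z^δ ∪ H_z^{δ₁})` and `C_{z'}^δ` are disjoint. -/
theorem convex_hull_domains_disjoint (D : ℕ) (hD : 1 ≤ D) (ε δ₁ δ : ℝ)
    (hδ₁0 : 0 < δ₁) (hδ₁ε : δ₁ < ε) (hδ0 : 0 < δ) (hδδ₁ : δ ≤ δ₁)
    (z z' : Fin D → ℝ) (hz : z ∈ Vset D) (hz' : z' ∈ Vset D) (hne : z ≠ z') :
    closure (convexHull ℝ (Hcube D ε δ z ∪ Hcube D ε δ₁ z)) ∩
      closure (convexHull ℝ (Hcube D ε δ z' ∪ Hcube D ε δ₁ z')) = ∅ :=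
  convex_hull_domains_disjoint_general D ε δ₁ δ hδ₁ε hδ0 hδδ₁ z z' hz hz' hne
end

section
/- Fix D ≥ 1, ε > 0 and 0 < δ₁ < ε. For 0 < δ ≤ δ₁ and z ∈ V, let C_z^δ denote the convex hull of H_z^δ ∪ H_z^{δ₁}. Then for every z ∈ V and every 0 < δ' < δ ≤ δ₁, one has closure(C_z^δ) ⊆ closure(C_z^{δ'}). -/
/-! The box `H_z^δ` is the product of the intervals about `ε z_k` of half-widths `(ε - δ)/2`
(integer coordinates) and `δ/4` (the half-integer coordinate), and these depend affinely on `δ`.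
Writing `δ = t δ' + (1 - t) δ₁`, rescaling the offset `a - ε z` of a point `a ∈ H_z^δ`
coordinatewise by the ratios of half-widths gives `b' ∈ H_z^{δ'}` and `b ∈ H_z^{δ₁}` with
`a = t b' + (1 - t) b`. Hence `H_z^δ ⊆ conv(H_z^{δ'} ∪ H_z^{δ₁})` already before closures. -/

open Set Metric

lemma IsHalfInt.ne_intCast {r : ℝ} (hr : IsHalfInt r) (m : ℤ) : r ≠ m := by
  obtain ⟨n, hn, rfl⟩ := hr
  intro h
  have : n = 2 * m := by exact_mod_cast (show (n : ℝ) = 2 * m by rw [← h]; ring)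
  exact Int.not_odd_iff_even.2 ⟨m, by omega⟩ hn

lemma Hcube_eq_univ_pi_ball {D : ℕ} {ε δ : ℝ} {z : Fin D → ℝ} {k₀ : Fin D}
    (hk₀ : IsHalfInt (z k₀)) (hint : ∀ k, k ≠ k₀ → ∃ m : ℤ, z k = m) :
    Hcube D ε δ z = univ.pi fun k => ball (ε * z k) (if k = k₀ then δ / 4 else (ε - δ) / 2) := by
  ext a
  simp only [Hcube, mem_ofPred_eq, mem_univ_pi, mem_ball, Real.dist_eq]
  refine forall_congr' fun k => ?_
  split_ifs with hk
  · subst hk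
    have hnot : ¬ ∃ m : ℤ, z k = m := fun ⟨m, hm⟩ => hk₀.ne_intCast m hm
    simp [hnot, hk₀]
  · have hnot : ¬ IsHalfInt (z k) := fun h => (hint k hk).elim h.ne_intCast
    simp [hnot, hint k hk]

section Combination

variable {E : Type*} [SeminormedAddCommGroup E] [NormedSpace ℝ E]

lemma exists_mem_ball_mem_ball_combo_eq {c x : E} {r s t : ℝ} (hr : 0 < r) (hs : 0 < s)
    (hx : x ∈ ball c (t * r + (1 - t) * s)) :
    ∃ y ∈ ball c r, ∃ y' ∈ ball c s, t • y + (1 - t) • y' = x := by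
  set ρ := t * r + (1 - t) * s
  have hρ : 0 < ρ := pos_of_mem_ball hx
  rw [mem_ball_iff_norm] at hx
  have rescale_mem {q : ℝ} (hq : 0 < q) : c + (q / ρ) • (x - c) ∈ ball c q := by
    rw [mem_ball_iff_norm, add_sub_cancel_left, norm_smul, Real.norm_of_nonneg (by positivity)]
    calc q / ρ * ‖x - c‖ < q / ρ * ρ := by gcongr
      _ = q := div_mul_cancel₀ q hρ.ne'
  refine ⟨_, rescale_mem hr, _, rescale_mem hs, ?_⟩
  calc t • (c + (r / ρ) • (x - c)) + (1 - t) • (c + (s / ρ) • (x - c))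
      = c + (ρ / ρ) • (x - c) := by simp only [ρ]; module
    _ = x := by rw [div_self hρ.ne', one_smul, add_sub_cancel]

lemma univ_pi_ball_subset_convexHull_union {ι : Type*} {c : ι → E} {r s ρ : ι → ℝ} {t : ℝ}
    (hr : ∀ k, 0 < r k) (hs : ∀ k, 0 < s k) (ht₀ : 0 ≤ t) (ht₁ : t ≤ 1)
    (hρ : ∀ k, ρ k = t * r k + (1 - t) * s k) :
    univ.pi (fun k => ball (c k) (ρ k)) ⊆
      convexHull ℝ (univ.pi (fun k => ball (c k) (r k)) ∪ univ.pi (fun k => ball (c k) (s k))) := by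
  intro x hx
  have hx' : ∀ k, x k ∈ ball (c k) (t * r k + (1 - t) * s k) := fun k => hρ k ▸ hx k (mem_univ k)
  choose y hy y' hy' hcombo using fun k => exists_mem_ball_mem_ball_combo_eq (hr k) (hs k) (hx' k)
  exact segment_subset_convexHull (mem_union_left _ (mem_univ_pi.2 hy))
    (mem_union_right _ (mem_univ_pi.2 hy')) ⟨t, 1 - t, ht₀, sub_nonneg.2 ht₁, by ring, funext hcombo⟩

end Combination

theorem convex_hull_domains_monotone_general (D : ℕ) (ε δ₁ δ δ' : ℝ)
    (hδ₁ε : δ₁ < ε) (hδ'0 : 0 < δ') (hδ'δ : δ' < δ) (hδδ₁ : δ ≤ δ₁)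
    (z : Fin D → ℝ) (hz : z ∈ Vset D) :
    closure (convexHull ℝ (Hcube D ε δ z ∪ Hcube D ε δ₁ z)) ⊆
      closure (convexHull ℝ (Hcube D ε δ' z ∪ Hcube D ε δ₁ z)) := by
  obtain ⟨k₀, hk₀, hint⟩ := hz
  have hgap : 0 < δ₁ - δ' := by linarith
  set t := (δ₁ - δ) / (δ₁ - δ')
  have ht₀ : 0 ≤ t := div_nonneg (by linarith) hgap.le
  have ht₁ : t ≤ 1 := (div_le_one hgap).2 (by linarith)
  have hδ : δ = t * δ' + (1 - t) * δ₁ := by simp only [t]; field_simp; ring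
  have hcube : Hcube D ε δ z ⊆ convexHull ℝ (Hcube D ε δ' z ∪ Hcube D ε δ₁ z) := by
    simp only [Hcube_eq_univ_pi_ball hk₀ hint]
    refine univ_pi_ball_subset_convexHull_union (fun k => ?_) (fun k => ?_) ht₀ ht₁ (fun k => ?_)
    all_goals split_ifs <;> linarith
  exact closure_mono <| convexHull_min (union_subset hcube (subset_union_right.trans
    (subset_convexHull ℝ _))) (convex_convexHull ℝ _)

/-- Lemma 5.2 (2): for `0 < δ' < δ ≤ δ₁ < ε` and `z ∈ V`, with
`C_z^δ = conv(H_z^δ ∪ H_z^{δ₁})`, one has `closure(C_z^δ) ⊆ closure(C_z^{δ'})`. -/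
theorem convex_hull_domains_monotone (D : ℕ) (hD : 1 ≤ D) (ε δ₁ δ δ' : ℝ)
    (hδ₁0 : 0 < δ₁) (hδ₁ε : δ₁ < ε) (hδ'0 : 0 < δ') (hδ'δ : δ' < δ) (hδδ₁ : δ ≤ δ₁)
    (z : Fin D → ℝ) (hz : z ∈ Vset D) :
    closure (convexHull ℝ (Hcube D ε δ z ∪ Hcube D ε δ₁ z)) ⊆
      closure (convexHull ℝ (Hcube D ε δ' z ∪ Hcube D ε δ₁ z)) :=
  convex_hull_domains_monotone_general D ε δ₁ δ δ' hδ₁ε hδ'0 hδ'δ hδδ₁ z hz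
end

section
/- Fix D ≥ 1. Then every point of ℝ^D having some coordinate of absolute value exactly 1/2 is covered by the cubes Q_z^δ: {a ∈ ℝ^D : |a_k| = 1/2 for some coordinate k} ⊆ ⋃_{0<δ<1/4} ⋃_{z ∈ A₀} Q_z^δ. -/
/-!
Round every coordinate of `a` to the nearest integer, except the coordinates that are already
half-integers, which are kept. The resulting point `z` lies in `A₀` because the coordinate with
`|a_k| = 1/2` is kept. The integer coordinates of `z` are at distance `< 1/2` from those of `a`
(a point at distance exactly `1/2` from its rounding is a half-integer), and the half-integer ones
at distance `0`; since there are finitely many coordinates, every small enough `δ > 0` works.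
-/

open Filter Topology

/-- `A₀`: points of `ℝ^D` all of whose coordinates are of the form `n/2` with `n ∈ ℤ`,
at least one coordinate being equal to `1/2` or `-1/2`. -/
def A0set (D : ℕ) : Set (Fin D → ℝ) :=
  {z | (∀ k, ∃ n : ℤ, z k = (n : ℝ) / 2) ∧ ∃ k, z k = 1 / 2 ∨ z k = -(1 / 2)}

/-- The open box `Q_z^δ`: coordinates with `z_k ∈ ℤ` are within `1/2 - δ` of `z_k`,
coordinates with `z_k` a half-integer are within `δ/2` of `z_k`. -/
def Qcube (D : ℕ) (δ : ℝ) (z : Fin D → ℝ) : Set (Fin D → ℝ) :=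
  {a | ∀ k, ((∃ m : ℤ, z k = (m : ℝ)) → |a k - z k| < 1 / 2 - δ) ∧
            (IsHalfInt (z k) → |a k - z k| < δ / 2)}

namespace IsHalfInt

theorem ne_intCast_s14 {r : ℝ} (h : IsHalfInt r) (m : ℤ) : r ≠ m := by
  obtain ⟨n, hn, rfl⟩ := h
  intro hnm
  have : n = 2 * m := by exact_mod_cast (by linarith : (n : ℝ) = 2 * m)
  exact Int.not_even_iff_odd.2 hn ⟨m, by omega⟩

theorem of_abs_sub_round_eq {x : ℝ} (h : |x - round x| = 1 / 2) : IsHalfInt x := by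
  rcases abs_eq (by norm_num : (0 : ℝ) ≤ 1 / 2) |>.1 h with h | h
  · exact ⟨2 * round x + 1, odd_two_mul_add_one _, by push_cast; linarith⟩
  · exact ⟨2 * round x - 1, ⟨round x - 1, by ring⟩, by push_cast; linarith⟩

theorem of_abs_eq_half {x : ℝ} (h : |x| = 1 / 2) : IsHalfInt x := by
  rcases abs_eq (by norm_num : (0 : ℝ) ≤ 1 / 2) |>.1 h with rfl | rfl
  · exact ⟨1, odd_one, by norm_num⟩
  · exact ⟨-1, odd_neg_one, by norm_num⟩

end IsHalfInt

theorem abs_sub_round_lt_half_of_not_isHalfInt {x : ℝ} (h : ¬ IsHalfInt x) :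
    |x - round x| < 1 / 2 :=
  (abs_sub_round x).lt_of_ne fun heq => h (IsHalfInt.of_abs_sub_round_eq heq)

open Classical in
noncomputable def roundUnlessHalfInt (x : ℝ) : ℝ :=
  if IsHalfInt x then x else round x

theorem exists_roundUnlessHalfInt_eq_div_two (x : ℝ) :
    ∃ n : ℤ, roundUnlessHalfInt x = (n : ℝ) / 2 := by
  unfold roundUnlessHalfInt
  split_ifs with h
  · obtain ⟨n, -, hn⟩ := h
    exact ⟨n, hn⟩
  · exact ⟨2 * round x, by push_cast; ring⟩

theorem eventually_qcube_coord_roundUnlessHalfInt (x : ℝ) :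
    ∀ᶠ δ in 𝓝[>] (0 : ℝ),
      ((∃ m : ℤ, roundUnlessHalfInt x = m) → |x - roundUnlessHalfInt x| < 1 / 2 - δ) ∧
        (IsHalfInt (roundUnlessHalfInt x) → |x - roundUnlessHalfInt x| < δ / 2) := by
  by_cases hx : IsHalfInt x
  · filter_upwards [self_mem_nhdsWithin] with δ (hδ : 0 < δ)
    simp only [roundUnlessHalfInt, if_pos hx, sub_self, abs_zero]
    exact ⟨fun ⟨m, hm⟩ => (hx.ne_intCast_s14 m hm).elim, fun _ => half_pos hδ⟩
  · have hlt := abs_sub_round_lt_half_of_not_isHalfInt hx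
    filter_upwards [Ioo_mem_nhdsGT (sub_pos.2 hlt)] with δ hδ
    simp only [roundUnlessHalfInt, if_neg hx]
    exact ⟨fun _ => by linarith [hδ.2], fun h => (h.ne_intCast_s14 _ rfl).elim⟩

theorem eventually_mem_qcube_roundUnlessHalfInt {D : ℕ} (a : Fin D → ℝ) :
    ∀ᶠ δ in 𝓝[>] (0 : ℝ), a ∈ Qcube D δ (roundUnlessHalfInt ∘ a) :=
  eventually_all.2 fun k => eventually_qcube_coord_roundUnlessHalfInt (a k)

theorem roundUnlessHalfInt_comp_mem_A0set {D : ℕ} {a : Fin D → ℝ} {k : Fin D}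
    (hk : |a k| = 1 / 2) : roundUnlessHalfInt ∘ a ∈ A0set D := by
  refine ⟨fun i => exists_roundUnlessHalfInt_eq_div_two (a i), k, ?_⟩
  simp only [Function.comp_apply, roundUnlessHalfInt, if_pos (IsHalfInt.of_abs_eq_half hk)]
  exact abs_eq (by norm_num) |>.1 hk

theorem half_level_set_covered_general (D : ℕ) :
    {a : Fin D → ℝ | ∃ k, |a k| = 1 / 2} ⊆
      ⋃ δ ∈ Set.Ioo (0 : ℝ) (1 / 4), ⋃ z ∈ A0set D, Qcube D δ z := by
  rintro a ⟨k, hk⟩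
  obtain ⟨δ, ha, hδ⟩ := ((eventually_mem_qcube_roundUnlessHalfInt a).and
    (Ioo_mem_nhdsGT (by norm_num : (0 : ℝ) < 1 / 4))).exists
  exact Set.mem_biUnion hδ <| Set.mem_biUnion (roundUnlessHalfInt_comp_mem_A0set hk) ha

/-- Covering property (6.1): every point of `ℝ^D` having some coordinate of absolute
value exactly `1/2` lies in some cube `Q_z^δ` with `0 < δ < 1/4` and `z ∈ A₀`. -/
theorem half_level_set_covered (D : ℕ) (hD : 1 ≤ D) :
    {a : Fin D → ℝ | ∃ k, |a k| = 1 / 2} ⊆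
      ⋃ δ ∈ Set.Ioo (0 : ℝ) (1 / 4), ⋃ z ∈ A0set D, Qcube D δ z :=
  half_level_set_covered_general D
end

section
/- Fix D ≥ 1 and 0 < δ < 1/4. Then for any two distinct z, z' ∈ A := {0} ∪ A₀, the closures of the cubes Q_z^δ and Q_{z'}^δ are disjoint: closure(Q_z^δ) ∩ closure(Q_{z'}^δ) = ∅. -/
/-!
Every point `z ∈ A` lies on the lattice `(ℤ/2)^D`, and `closure Q_z^δ` is the closed box of
half-width `1/2 - δ` or `δ/2` in each coordinate, according as `z_k` is an integer or a
half-integer. Two distinct lattice points differ in some coordinate `k`; there they are at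
distance `≥ 1` if `z_k, z'_k` have the same type and `≥ 1/2` otherwise, while the half-widths
add up to at most `max (1 - 2δ) δ < 1`, resp. to `1/2 - δ/2 < 1/2`.
-/

noncomputable def halfWidth (δ : ℝ) (n : ℤ) : ℝ := if Even n then 1 / 2 - δ else δ / 2

lemma abs_sub_le_halfWidth_of_mem_closure_Qcube {D : ℕ} {δ : ℝ} {z a : Fin D → ℝ}
    (ha : a ∈ closure (Qcube D δ z)) {k : Fin D} {n : ℤ} (hn : z k = n / 2) :
    |a k - z k| ≤ halfWidth δ n := by
  have hcont : Continuous fun b : Fin D → ℝ => |b k - z k| := by fun_prop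
  have hbox : Qcube D δ z ⊆ {b | |b k - z k| < halfWidth δ n} := by
    intro b hb
    by_cases he : Even n
    · obtain ⟨m, rfl⟩ := he
      simpa [halfWidth] using (hb k).1 ⟨m, by rw [hn]; push_cast; ring⟩
    · simpa [halfWidth, he] using (hb k).2 ⟨n, Int.not_even_iff_odd.mp he, hn⟩
  exact closure_lt_subset_le hcont continuous_const (closure_mono hbox ha)

lemma halfWidth_add_halfWidth_lt {δ : ℝ} (hδ0 : 0 < δ) (hδ1 : δ < 1) {n n' : ℤ} (h : n ≠ n') :
    halfWidth δ n + halfWidth δ n' < |(n : ℝ) / 2 - n' / 2| := by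
  have hsub : n - n' ≠ 0 := sub_ne_zero.mpr h
  have hdist : |(n : ℝ) / 2 - n' / 2| = ((|n - n'| : ℤ) : ℝ) / 2 := by
    rw [div_sub_div_same, abs_div, abs_two]; push_cast; rfl
  have hone : (1 : ℝ) ≤ ((|n - n'| : ℤ) : ℝ) := by exact_mod_cast Int.one_le_abs hsub
  have htwo : (Even n ↔ Even n') → (2 : ℝ) ≤ ((|n - n'| : ℤ) : ℝ) := fun hpar => by
    exact_mod_cast Int.le_of_dvd (abs_pos.mpr hsub)
      ((dvd_abs _ _).mpr (Int.even_sub.mpr hpar).two_dvd)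
  rw [hdist]
  by_cases hn : Even n <;> by_cases hn' : Even n' <;>
    simp only [halfWidth, hn, hn', if_true, if_false]
  · linarith [htwo (by tauto)]
  · linarith
  · linarith
  · linarith [htwo (by tauto)]

lemma exists_eq_int_div_two_of_mem {D : ℕ} {z : Fin D → ℝ}
    (hz : z ∈ ({0} : Set (Fin D → ℝ)) ∪ A0set D) (k : Fin D) : ∃ n : ℤ, z k = n / 2 := by
  rcases hz with rfl | hz
  · exact ⟨0, by simp⟩
  · exact hz.1 k

theorem Qcube_closures_disjoint_general (D : ℕ) (δ : ℝ) (hδ0 : 0 < δ)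
    (hδ : δ < 1 / 4) (z z' : Fin D → ℝ)
    (hz : z ∈ ({0} : Set (Fin D → ℝ)) ∪ A0set D)
    (hz' : z' ∈ ({0} : Set (Fin D → ℝ)) ∪ A0set D) (hne : z ≠ z') :
    closure (Qcube D δ z) ∩ closure (Qcube D δ z') = ∅ := by
  rw [Set.eq_empty_iff_forall_notMem]
  rintro a ⟨ha, ha'⟩
  obtain ⟨k, hk⟩ := Function.ne_iff.mp hne
  obtain ⟨n, hn⟩ := exists_eq_int_div_two_of_mem hz k
  obtain ⟨n', hn'⟩ := exists_eq_int_div_two_of_mem hz' k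
  have hnn' : n ≠ n' := by rintro rfl; exact hk (hn.trans hn'.symm)
  have hgap := halfWidth_add_halfWidth_lt hδ0 (by linarith) hnn'
  have h := abs_sub_le_halfWidth_of_mem_closure_Qcube ha hn
  have h' := abs_sub_le_halfWidth_of_mem_closure_Qcube ha' hn'
  have htri := abs_sub_le (z k) (a k) (z' k)
  rw [← hn, ← hn'] at hgap
  rw [abs_sub_comm] at h
  linarith

/-- For `0 < δ < 1/4` and distinct `z, z' ∈ A = {0} ∪ A₀`, the closures of the cubes
`Q_z^δ` and `Q_{z'}^δ` are disjoint. -/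
theorem Qcube_closures_disjoint (D : ℕ) (hD : 1 ≤ D) (δ : ℝ) (hδ0 : 0 < δ)
    (hδ : δ < 1 / 4) (z z' : Fin D → ℝ)
    (hz : z ∈ ({0} : Set (Fin D → ℝ)) ∪ A0set D)
    (hz' : z' ∈ ({0} : Set (Fin D → ℝ)) ∪ A0set D) (hne : z ≠ z') :
    closure (Qcube D δ z) ∩ closure (Qcube D δ z') = ∅ :=
  Qcube_closures_disjoint_general D δ hδ0 hδ z z' hz hz' hne
end
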